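/- arXiv:2511.02990 — 3 statements merged into one kernel-verified Lean document; each statement's English description precedes it below -/
import Mathlib

section
/- Let v be an inner vertex of a branch decomposition T with children v1 and v2. If Ψ1 ∈ proj(v̄1), then there exist Ψ ∈ proj(v̄) and Φ2 ∈ proj(v2) such that Ψ1^c = min{Ψ^c + Φ2^c, γ^c} for all c ∈ C_{v1}. Conversely, for all Ψ ∈ proj(v̄) and Φ2 ∈ proj(v2) there is a unique Ψ1 ∈ proj(v̄1) such that Ψ1^c = min{Ψ^c + Φ2^c, γ^c} for all c ∈ C_{v1}. -/
open Finset

/-- A (translated) separable system with variable type `V`, constraint type `C` and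
finite domain `D`.  The constraint set is `C = Cin ∪ Cge` (disjointly), where `Cin`
is the set of constraints of type `∈` (with target set `Γ c` whose largest element
is the threshold `γ c`) and `Cge` is the set of constraints of type `≥` (with
threshold `γ c`).  Every constraint `c` has nonnegative summands `g c x : D → ℕ`. -/
structure SepSystem (V C D : Type) where
  /-- the summand functions `g^c_x : D → ℤ≥0` -/
  g : C → V → D → ℕ
  /-- the thresholds `γ^c` -/
  γ : C → ℕ
  /-- the target sets `Γ^c` for constraints in `C^∈` -/
  Γ : C → Finset ℕ
  /-- the set of constraints of type `∈` -/
  Cin : Finset C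
  /-- the set of constraints of type `≥` -/
  Cge : Finset C
  /-- `C^∈` and `C^≥` are disjoint -/
  disj : Disjoint Cin Cge
  /-- every constraint is in `C^∈ ∪ C^≥` -/
  cover : ∀ c, c ∈ Cin ∨ c ∈ Cge
  /-- for `c ∈ C^∈`, `γ^c` belongs to `Γ^c` … -/
  gammaMem : ∀ c ∈ Cin, γ c ∈ Γ c
  /-- … and is its largest element -/
  gammaMax : ∀ c ∈ Cin, ∀ a ∈ Γ c, a ≤ γ c

namespace SepSystem

variable {V C D : Type} [DecidableEq V] [DecidableEq C] [Fintype V] [Fintype C]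

/-- The constraint bound `cb^c(τ)` of the assignment `τ` restricted to `X'`. -/
def cb (S : SepSystem V C D) (X' : Finset V) (τ : V → D) (c : C) : ℕ :=
  ∑ x ∈ X', S.g c x (τ x)

/-- The map `C'/τ` (for `τ` restricted to `X'`), encoded as the function `C → ℕ`
that vanishes outside `C'`. -/
def cdiv (S : SepSystem V C D) (C' : Finset C) (X' : Finset V) (τ : V → D) : C → ℕ :=
  fun c => if c ∈ C' then min (S.cb X' τ c) (S.γ c) else 0

/-- The projection `proj(C', X') = { C'/τ : τ : X' → D }`. -/
def proj (S : SepSystem V C D) (C' : Finset C) (X' : Finset V) : Set (C → ℕ) :=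
  { f | ∃ τ : V → D, f = S.cdiv C' X' τ }

end SepSystem

/-!
An assignment on `X̄_{v1}` is the same thing as a pair of assignments on the disjoint parts
`X̄_v` and `X_{v2}`, and its constraint bounds are the sums of the two partial bounds.
Truncation at `γ` is compatible with this: `min (min a γ + min b γ) γ = min (a + b) γ`.
Uniqueness holds because a map in `proj(C_{v1}, ·)` vanishes outside `C_{v1}`.
-/

theorem Nat.min_min_add_min_min (a b g : ℕ) : min (min a g + min b g) g = min (a + b) g := by
  omega

namespace SepSystem

variable {V C D : Type} (S : SepSystem V C D)

theorem cb_congr {X' : Finset V} {τ σ : V → D} (h : ∀ x ∈ X', τ x = σ x) (c : C) :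
    S.cb X' τ c = S.cb X' σ c :=
  sum_congr rfl fun x hx => by rw [h x hx]

theorem cb_compl_eq_add [DecidableEq V] [Fintype V] {X₁ X₂ : Finset V} (hX : Disjoint X₁ X₂)
    (τ : V → D) (c : C) :
    S.cb X₁ᶜ τ c = S.cb (X₁ ∪ X₂)ᶜ τ c + S.cb X₂ τ c := by
  rw [compl_union, ← sdiff_eq_inter_compl]
  exact (sum_sdiff (subset_compl_iff_disjoint_left.mpr hX)).symm

theorem cdiv_of_mem [DecidableEq C] {C' : Finset C} {c : C}
    (hc : c ∈ C') (X' : Finset V) (τ : V → D) :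
    S.cdiv C' X' τ c = min (S.cb X' τ c) (S.γ c) :=
  if_pos hc

theorem cdiv_of_notMem [DecidableEq C] {C' : Finset C} {c : C}
    (hc : c ∉ C') (X' : Finset V) (τ : V → D) :
    S.cdiv C' X' τ c = 0 :=
  if_neg hc

theorem eq_of_mem_proj_of_eqOn [DecidableEq C] {C' : Finset C} {X₁ X₂ : Finset V}
    {f f' : C → ℕ} (hf : f ∈ S.proj C' X₁) (hf' : f' ∈ S.proj C' X₂)
    (h : ∀ c ∈ C', f c = f' c) : f = f' := by
  obtain ⟨τ, rfl⟩ := hf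
  obtain ⟨σ, rfl⟩ := hf'
  funext c
  by_cases hc : c ∈ C'
  · exact h c hc
  · rw [S.cdiv_of_notMem hc, S.cdiv_of_notMem hc]

theorem cdiv_piecewise [DecidableEq V] [DecidableEq C] [Fintype V] [Fintype C]
    {X₁ X₂ : Finset V} {C₁ C₂ : Finset C} (hX : Disjoint X₁ X₂)
    {c : C} (hc₁ : c ∈ C₁) (hc₂ : c ∉ C₂) (τ σ : V → D) :
    S.cdiv C₁ X₁ᶜ (X₂.piecewise σ τ) c =
      min (S.cdiv (C₁ ∪ C₂) (X₁ ∪ X₂)ᶜ τ c + S.cdiv C₂ᶜ X₂ σ c) (S.γ c) := by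
  have h_outside : ∀ x ∈ (X₁ ∪ X₂)ᶜ, X₂.piecewise σ τ x = τ x := fun x hx =>
    piecewise_eq_of_notMem _ _ _ fun hx₂ => (mem_compl.mp hx) (mem_union_right _ hx₂)
  have h_inside : ∀ x ∈ X₂, X₂.piecewise σ τ x = σ x := fun x hx =>
    piecewise_eq_of_mem _ _ _ hx
  rw [S.cdiv_of_mem hc₁, S.cdiv_of_mem (mem_union_left _ hc₁),
    S.cdiv_of_mem (mem_compl.mpr hc₂), S.cb_compl_eq_add hX, S.cb_congr h_outside,
    S.cb_congr h_inside, Nat.min_min_add_min_min]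

end SepSystem

/-- Lemma: relation between `proj(v̄1)`, `proj(v̄)`, `proj(v2)` for an inner vertex `v`
with children `v1`, `v2`.  If `Ψ1 ∈ proj(v̄1)` then there are `Ψ ∈ proj(v̄)` and
`Φ2 ∈ proj(v2)` satisfying (L2); conversely for all `Ψ ∈ proj(v̄)`, `Φ2 ∈ proj(v2)`
there is a unique `Ψ1 ∈ proj(v̄1)` satisfying (L2). -/
theorem SepSystem.proj_node_bar {V C D : Type} [DecidableEq V] [DecidableEq C]
    [Fintype V] [Fintype C] (S : SepSystem V C D)
    (Xv1 Xv2 : Finset V) (Cv1 Cv2 : Finset C)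
    (hX : Disjoint Xv1 Xv2) (hC : Disjoint Cv1 Cv2) :
    (∀ Ψ1 ∈ S.proj Cv1 Xv1ᶜ,
      ∃ Ψ ∈ S.proj (Cv1 ∪ Cv2) (Xv1 ∪ Xv2)ᶜ, ∃ Φ2 ∈ S.proj Cv2ᶜ Xv2,
        ∀ c ∈ Cv1, Ψ1 c = min (Ψ c + Φ2 c) (S.γ c)) ∧
    (∀ Ψ ∈ S.proj (Cv1 ∪ Cv2) (Xv1 ∪ Xv2)ᶜ, ∀ Φ2 ∈ S.proj Cv2ᶜ Xv2,
      ∃! Ψ1, Ψ1 ∈ S.proj Cv1 Xv1ᶜ ∧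
        ∀ c ∈ Cv1, Ψ1 c = min (Ψ c + Φ2 c) (S.γ c)) := by
  have h_split : ∀ c ∈ Cv1, ∀ τ σ : V → D,
      S.cdiv Cv1 Xv1ᶜ (Xv2.piecewise σ τ) c =
        min (S.cdiv (Cv1 ∪ Cv2) (Xv1 ∪ Xv2)ᶜ τ c + S.cdiv Cv2ᶜ Xv2 σ c) (S.γ c) :=
    fun c hc => S.cdiv_piecewise hX hc (disjoint_left.mp hC hc)
  constructor
  · rintro _ ⟨τ, rfl⟩
    refine ⟨_, ⟨τ, rfl⟩, _, ⟨τ, rfl⟩, fun c hc => ?_⟩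
    rw [← h_split c hc, piecewise_same]
  · rintro _ ⟨τ, rfl⟩ _ ⟨σ, rfl⟩
    refine ⟨_, ⟨⟨_, rfl⟩, fun c hc => h_split c hc τ σ⟩, ?_⟩
    rintro Ψ1 ⟨hΨ1, hΨ1_split⟩
    exact S.eq_of_mem_proj_of_eqOn hΨ1 ⟨_, rfl⟩ fun c hc =>
      (hΨ1_split c hc).trans (h_split c hc τ σ).symm
end

section
/- Let v be an inner vertex of a branch decomposition T with children v1 and v2, and let (Φ,Ψ), (Φ1,Ψ1), (Φ2,Ψ2) be linked shapes for v, v1, v2. If τ1 : X_{v1} → D has shape (Φ1,Ψ1) and τ2 : X_{v2} → D has shape (Φ2,Ψ2), then τ := τ1 ∪ τ2 : X_v → D has shape (Φ,Ψ). -/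
open Finset

namespace SepSystem

variable {V C D : Type} [DecidableEq V] [DecidableEq C] [Fintype V] [Fintype C]

/-- `τ` (restricted to `X_v`) has shape `(Φ, Ψ)` at a vertex `v` with variables `Xv`
and constraints `Cv`: conditions (S1), (S1*), (S2∈), (S2≥). -/
def HasShape (S : SepSystem V C D) (Xv : Finset V) (Cv : Finset C)
    (Φ Ψ : C → ℕ) (τ : V → D) : Prop :=
  (∀ c ∈ Cvᶜ, Φ c = min (S.cb Xv τ c) (S.γ c)) ∧
  (∀ c ∈ Cvᶜ ∩ S.Cin, S.cb Xv τ c ≤ S.γ c) ∧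
  (∀ c ∈ Cv ∩ S.Cin, Ψ c + S.cb Xv τ c ∈ S.Γ c) ∧
  (∀ c ∈ Cv ∩ S.Cge, S.γ c ≤ Ψ c + S.cb Xv τ c)

end SepSystem
namespace SepSystem

variable {V C D : Type} [DecidableEq V] [DecidableEq C] [Fintype V] [Fintype C]

/-- `(Φ,Ψ)`, `(Φ1,Ψ1)`, `(Φ2,Ψ2)` are linked shapes for an inner vertex `v`
(variables `Xv1 ∪ Xv2`, constraints `Cv1 ∪ Cv2`) with children `v1` and `v2`:
they are shapes, they satisfy (L1*), (L2*), (L3*) and the equations (L1), (L2), (L3). -/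
def Linked (S : SepSystem V C D) (Xv1 Xv2 : Finset V) (Cv1 Cv2 : Finset C)
    (Φ Ψ Φ1 Ψ1 Φ2 Ψ2 : C → ℕ) : Prop :=
  Ψ ∈ S.proj (Cv1 ∪ Cv2) (Xv1 ∪ Xv2)ᶜ ∧
  Φ1 ∈ S.proj Cv1ᶜ Xv1 ∧
  Φ2 ∈ S.proj Cv2ᶜ Xv2 ∧
  Φ ∈ S.proj (Cv1 ∪ Cv2)ᶜ (Xv1 ∪ Xv2) ∧
  Ψ1 ∈ S.proj Cv1 Xv1ᶜ ∧
  Ψ2 ∈ S.proj Cv2 Xv2ᶜ ∧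
  (∀ c ∈ (Cv1 ∪ Cv2)ᶜ ∩ S.Cin, Φ1 c + Φ2 c ≤ S.γ c) ∧
  (∀ c ∈ Cv1 ∩ S.Cin, Ψ c + Φ2 c ≤ S.γ c) ∧
  (∀ c ∈ Cv2 ∩ S.Cin, Ψ c + Φ1 c ≤ S.γ c) ∧
  (∀ c ∈ (Cv1 ∪ Cv2)ᶜ, Φ c = min (Φ1 c + Φ2 c) (S.γ c)) ∧
  (∀ c ∈ Cv1, Ψ1 c = min (Ψ c + Φ2 c) (S.γ c)) ∧
  (∀ c ∈ Cv2, Ψ2 c = min (Ψ c + Φ1 c) (S.γ c))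

end SepSystem

/-! Constraint bounds add up over the disjoint variable sets of the two children, and capping
at `γ` absorbs an inner cap: `min (a + min b γ) γ = min (a + b) γ`. So each linked equation turns
the children's capped values into the parent's. For a constraint in `C^∈` the linked inequalities
show that no cap was active, so the exact sums, and with them membership in `Γ`, are inherited. -/

theorem min_add_min_min {α : Type*} [AddCommMonoid α] [LinearOrder α] [IsOrderedAddMonoid α]
    [CanonicallyOrderedAdd α] (a b γ : α) : min (a + min b γ) γ = min (a + b) γ := by
  rcases le_total b γ with hb | hb
  · rw [min_eq_left hb]
  · rw [min_eq_right hb, min_eq_right le_add_self,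
      min_eq_right (hb.trans le_add_self)]

namespace SepSystem

variable {V C D : Type}

theorem cb_union [DecidableEq V] (S : SepSystem V C D) {X₁ X₂ : Finset V} (hX : Disjoint X₁ X₂)
    {τ₁ τ₂ τ : V → D} (h₁ : ∀ x ∈ X₁, τ x = τ₁ x) (h₂ : ∀ x ∈ X₂, τ x = τ₂ x) (c : C) :
    S.cb (X₁ ∪ X₂) τ c = S.cb X₁ τ₁ c + S.cb X₂ τ₂ c := by
  unfold cb
  rw [sum_union hX, sum_congr rfl fun x hx => congrArg _ (h₁ x hx),
    sum_congr rfl fun x hx => congrArg _ (h₂ x hx)]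

variable [DecidableEq C] [Fintype C] {S : SepSystem V C D} {X : Finset V} {Cv : Finset C}
  {Φ Ψ : C → ℕ} {τ : V → D} {c : C}

theorem HasShape.eq_min_cb (h : S.HasShape X Cv Φ Ψ τ) (hc : c ∉ Cv) :
    Φ c = min (S.cb X τ c) (S.γ c) :=
  h.1 c (mem_compl.2 hc)

theorem HasShape.cb_le (h : S.HasShape X Cv Φ Ψ τ) (hc : c ∉ Cv) (hin : c ∈ S.Cin) :
    S.cb X τ c ≤ S.γ c :=
  h.2.1 c (mem_inter.2 ⟨mem_compl.2 hc, hin⟩)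

theorem HasShape.eq_cb (h : S.HasShape X Cv Φ Ψ τ) (hc : c ∉ Cv) (hin : c ∈ S.Cin) :
    Φ c = S.cb X τ c := by
  rw [h.eq_min_cb hc, min_eq_left (h.cb_le hc hin)]

theorem HasShape.eq_min_add_cb {Ψ₀ Ψ' : C → ℕ} (h : S.HasShape X Cv Φ Ψ τ) (hc : c ∉ Cv)
    (hΨ' : Ψ' c = min (Ψ₀ c + Φ c) (S.γ c)) : Ψ' c = min (Ψ₀ c + S.cb X τ c) (S.γ c) := by
  rw [hΨ', h.eq_min_cb hc, min_add_min_min]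

theorem HasShape.add_cb_eq {Ψ₀ Ψ' : C → ℕ} (h : S.HasShape X Cv Φ Ψ τ) (hc : c ∉ Cv)
    (hin : c ∈ S.Cin) (hle : Ψ₀ c + Φ c ≤ S.γ c) (hΨ' : Ψ' c = min (Ψ₀ c + Φ c) (S.γ c)) :
    Ψ₀ c + S.cb X τ c = Ψ' c := by
  rw [hΨ', min_eq_left hle, h.eq_cb hc hin]

/-- A constraint `c` of the child `v'` at the parent: `Xs, Cs, Φs, τs` belong to the sibling,
`Ψ₀` to the parent. -/
theorem HasShape.of_sibling {X' Xs : Finset V} {C' Cs : Finset C} {Φ' Ψ' Φs Ψs Ψ₀ : C → ℕ}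
    {τ' τs : V → D} (h' : S.HasShape X' C' Φ' Ψ' τ') (hs : S.HasShape Xs Cs Φs Ψs τs)
    (hc' : c ∈ C') (hcs : c ∉ Cs) (hle : c ∈ S.Cin → Ψ₀ c + Φs c ≤ S.γ c)
    (hΨ' : Ψ' c = min (Ψ₀ c + Φs c) (S.γ c)) :
    (c ∈ S.Cin → Ψ₀ c + (S.cb X' τ' c + S.cb Xs τs c) ∈ S.Γ c) ∧
    (c ∈ S.Cge → S.γ c ≤ Ψ₀ c + (S.cb X' τ' c + S.cb Xs τs c)) := by
  constructor
  · intro hin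
    rw [add_comm (S.cb X' τ' c), ← add_assoc, hs.add_cb_eq hcs hin (hle hin) hΨ']
    exact h'.2.2.1 c (mem_inter.2 ⟨hc', hin⟩)
  · intro hge
    have hγ := h'.2.2.2 c (mem_inter.2 ⟨hc', hge⟩)
    rw [hs.eq_min_add_cb hcs hΨ'] at hγ
    omega

end SepSystem

/-- Lemma (from children to parent): if `(Φ,Ψ)`, `(Φ1,Ψ1)`, `(Φ2,Ψ2)` are linked shapes
for an inner vertex `v` and its children `v1`, `v2`, and `τ1 : X_{v1} → D` has shape
`(Φ1,Ψ1)` and `τ2 : X_{v2} → D` has shape `(Φ2,Ψ2)`, then `τ = τ1 ∪ τ2` has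
shape `(Φ,Ψ)`. -/
theorem SepSystem.hasShape_union {V C D : Type} [DecidableEq V] [DecidableEq C]
    [Fintype V] [Fintype C] (S : SepSystem V C D)
    (Xv1 Xv2 : Finset V) (Cv1 Cv2 : Finset C)
    (hX : Disjoint Xv1 Xv2) (hC : Disjoint Cv1 Cv2)
    (Φ Ψ Φ1 Ψ1 Φ2 Ψ2 : C → ℕ)
    (hlink : S.Linked Xv1 Xv2 Cv1 Cv2 Φ Ψ Φ1 Ψ1 Φ2 Ψ2)
    (τ1 τ2 τ : V → D)
    (h1 : ∀ x ∈ Xv1, τ x = τ1 x) (h2 : ∀ x ∈ Xv2, τ x = τ2 x)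
    (hs1 : S.HasShape Xv1 Cv1 Φ1 Ψ1 τ1) (hs2 : S.HasShape Xv2 Cv2 Φ2 Ψ2 τ2) :
    S.HasShape (Xv1 ∪ Xv2) (Cv1 ∪ Cv2) Φ Ψ τ := by
  obtain ⟨-, -, -, -, -, -, hL1s, hL2s, hL3s, hL1, hL2, hL3⟩ := hlink
  have hcb := S.cb_union hX h1 h2
  have hchild : ∀ c ∈ Cv1 ∪ Cv2,
      (c ∈ S.Cin → Ψ c + S.cb (Xv1 ∪ Xv2) τ c ∈ S.Γ c) ∧
      (c ∈ S.Cge → S.γ c ≤ Ψ c + S.cb (Xv1 ∪ Xv2) τ c) := by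
    intro c hc
    rw [hcb]
    rcases mem_union.1 hc with hc1 | hc2
    · exact hs1.of_sibling hs2 hc1 (disjoint_left.1 hC hc1)
        (fun hin => hL2s c (mem_inter.2 ⟨hc1, hin⟩)) (hL2 c hc1)
    · rw [add_comm (S.cb Xv1 τ1 c)]
      exact hs2.of_sibling hs1 hc2 (disjoint_right.1 hC hc2)
        (fun hin => hL3s c (mem_inter.2 ⟨hc2, hin⟩)) (hL3 c hc2)
  refine ⟨fun c hc => ?_, fun c hc => ?_, fun c hc => (hchild c (mem_inter.1 hc).1).1
    (mem_inter.1 hc).2, fun c hc => (hchild c (mem_inter.1 hc).1).2 (mem_inter.1 hc).2⟩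
  · obtain ⟨hc1, hc2⟩ := not_or.1 (mt mem_union.2 (mem_compl.1 hc))
    rw [hL1 c hc, hs1.eq_min_cb hc1, hs2.eq_min_cb hc2, hcb, add_comm, min_add_min_min,
      add_comm, min_add_min_min]
  · obtain ⟨hcomp, hin⟩ := mem_inter.1 hc
    obtain ⟨hc1, hc2⟩ := not_or.1 (mt mem_union.2 (mem_compl.1 hcomp))
    rw [hcb, ← hs1.eq_cb hc1 hin, ← hs2.eq_cb hc2 hin]
    exact hL1s c hc
end

section
/- Consider a separable system with C^∈ = ∅ and weights ω^c ∈ ℝ for every c ∈ C. Let v be an inner vertex of a branch decomposition T with children v1 and v2, let (Φ,Ψ), (Φ1,Ψ1), (Φ2,Ψ2) be linked shapes for v, v1, v2, let τ1, τ1' : X_{v1} → D have configuration Φ1 and τ2, τ2' : X_{v2} → D have configuration Φ2. If ω^{Ψ1}(τ1') ≤ ω^{Ψ1}(τ1) and ω^{Ψ2}(τ2') ≤ ω^{Ψ2}(τ2), then ω^Ψ(τ1' ∪ τ2') ≤ ω^Ψ(τ1 ∪ τ2). -/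
/-!
Capping the bound `cb^c(τ1 ∪ τ2) = cb^c(τ1) + cb^c(τ2)` of a constraint `c ∈ C_{v1}` at
`γ^c - Ψ^c` splits into two capped pieces: `τ2` contributes `min Φ2^c (γ^c - Ψ^c)`, and
`τ1` contributes `cb^c(τ1)` capped at the remaining capacity `γ^c - Ψ1^c`. Summing over
`C_v = C_{v1} ∪ C_{v2}` gives `ω^Ψ(τ1 ∪ τ2) = ω^{Ψ1}(τ1) + ω^{Ψ2}(τ2) + K`, where `K`
depends only on the shapes, so the weight of the union is monotone in the weights of its
halves.
-/

open Finset

/-- A (translated) separable system with `C^∈ = ∅`: all constraints are of type `≥`,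
given by summands `g c x : D → ℕ` and thresholds `γ c`. -/
structure SepSystemGe (V C D : Type) where
  /-- the summand functions `g^c_x : D → ℤ≥0` -/
  g : C → V → D → ℕ
  /-- the thresholds `γ^c` -/
  γ : C → ℕ

namespace SepSystemGe

variable {V C D : Type} [DecidableEq V] [DecidableEq C] [Fintype V] [Fintype C]

/-- The constraint bound `cb^c(τ)` of the assignment `τ` restricted to `X'`. -/
def cb (S : SepSystemGe V C D) (X' : Finset V) (τ : V → D) (c : C) : ℕ :=
  ∑ x ∈ X', S.g c x (τ x)

/-- The map `C'/τ` (for `τ` restricted to `X'`), encoded as the function `C → ℕ`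
that vanishes outside `C'`. -/
def cdiv (S : SepSystemGe V C D) (C' : Finset C) (X' : Finset V) (τ : V → D) : C → ℕ :=
  fun c => if c ∈ C' then min (S.cb X' τ c) (S.γ c) else 0

/-- The projection `proj(C', X') = { C'/τ : τ : X' → D }`. -/
def proj (S : SepSystemGe V C D) (C' : Finset C) (X' : Finset V) : Set (C → ℕ) :=
  { f | ∃ τ : V → D, f = S.cdiv C' X' τ }

/-- `τ` (restricted to `X_v`) has configuration `Φ`, i.e. `Φ = C̄_v/τ`. -/
def HasConfig (S : SepSystemGe V C D) (Xv : Finset V) (Cv : Finset C)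
    (Φ : C → ℕ) (τ : V → D) : Prop :=
  Φ = S.cdiv Cvᶜ Xv τ

/-- The `Ψ`-weight `ω^Ψ(τ) = Σ_{c ∈ C_v} ω^c · min (cb^c(τ)) (γ^c - Ψ^c)`
(`min` taken in `ℤ`). -/
def wweight (S : SepSystemGe V C D) (ω : C → ℝ) (Xv : Finset V) (Cv : Finset C)
    (Ψ : C → ℕ) (τ : V → D) : ℝ :=
  ∑ c ∈ Cv, ω c * ((min (S.cb Xv τ c : ℤ) ((S.γ c : ℤ) - (Ψ c : ℤ)) : ℤ) : ℝ)

/-- Linked shapes for an inner vertex with children `v1`, `v2` (here `C^∈ = ∅`, so a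
triple of shapes is linked if the memberships and the equations (L1), (L2), (L3) hold). -/
def LinkedW (S : SepSystemGe V C D) (Xv1 Xv2 : Finset V) (Cv1 Cv2 : Finset C)
    (Φ Ψ Φ1 Ψ1 Φ2 Ψ2 : C → ℕ) : Prop :=
  Ψ ∈ S.proj (Cv1 ∪ Cv2) (Xv1 ∪ Xv2)ᶜ ∧
  Φ1 ∈ S.proj Cv1ᶜ Xv1 ∧
  Φ2 ∈ S.proj Cv2ᶜ Xv2 ∧
  Φ ∈ S.proj (Cv1 ∪ Cv2)ᶜ (Xv1 ∪ Xv2) ∧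
  Ψ1 ∈ S.proj Cv1 Xv1ᶜ ∧
  Ψ2 ∈ S.proj Cv2 Xv2ᶜ ∧
  (∀ c ∈ (Cv1 ∪ Cv2)ᶜ, Φ c = min (Φ1 c + Φ2 c) (S.γ c)) ∧
  (∀ c ∈ Cv1, Ψ1 c = min (Ψ c + Φ2 c) (S.γ c)) ∧
  (∀ c ∈ Cv2, Ψ2 c = min (Ψ c + Φ1 c) (S.γ c))

end SepSystemGe

theorem Int.min_natCast_add_sub_eq (a b γ ψ : ℕ) :
    min ((a : ℤ) + b) ((γ : ℤ) - ψ) =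
      min (a : ℤ) ((γ : ℤ) - ((min (ψ + min b γ) γ : ℕ) : ℤ)) +
        min ((min b γ : ℕ) : ℤ) ((γ : ℤ) - ψ) := by
  push_cast
  omega

namespace SepSystemGe

variable {V C D : Type} (S : SepSystemGe V C D)

/-- The part of the weight at `v` that a child's constraints `Cv` receive from the sibling's
configuration `Φ`. -/
def configWeight (ω : C → ℝ) (Cv : Finset C) (Ψ Φ : C → ℕ) : ℝ :=
  ∑ c ∈ Cv, ω c * ((min (Φ c : ℤ) ((S.γ c : ℤ) - (Ψ c : ℤ)) : ℤ) : ℝ)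

theorem cb_congr {X : Finset V} {τ σ : V → D} (h : ∀ x ∈ X, τ x = σ x) (c : C) :
    S.cb X τ c = S.cb X σ c :=
  Finset.sum_congr rfl fun x hx => by rw [h x hx]

theorem cb_union [DecidableEq V] {X₁ X₂ : Finset V} (hX : Disjoint X₁ X₂) (τ : V → D)
    (c : C) : S.cb (X₁ ∪ X₂) τ c = S.cb X₁ τ c + S.cb X₂ τ c :=
  Finset.sum_union hX

theorem HasConfig.apply_of_notMem [DecidableEq C] [Fintype C] {S : SepSystemGe V C D}
    {Xv : Finset V} {Cv : Finset C} {Φ : C → ℕ} {τ : V → D} (h : S.HasConfig Xv Cv Φ τ)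
    {c : C} (hc : c ∉ Cv) :
    Φ c = min (S.cb Xv τ c) (S.γ c) := by
  rw [h, cdiv, if_pos (Finset.mem_compl.mpr hc)]

theorem wweight_union_constraints [DecidableEq C] (ω : C → ℝ) (X : Finset V)
    {C₁ C₂ : Finset C} (hC : Disjoint C₁ C₂) (Ψ : C → ℕ) (τ : V → D) :
    S.wweight ω X (C₁ ∪ C₂) Ψ τ = S.wweight ω X C₁ Ψ τ + S.wweight ω X C₂ Ψ τ :=
  Finset.sum_union hC

theorem wweight_union_child [DecidableEq V] [DecidableEq C] [Fintype C] (ω : C → ℝ)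
    {XA XB : Finset V} {CA CB : Finset C} (hX : Disjoint XA XB) (hC : Disjoint CA CB)
    {Ψ ΨA ΦB : C → ℕ} (hΨA : ∀ c ∈ CA, ΨA c = min (Ψ c + ΦB c) (S.γ c))
    {τ τA τB : V → D} (hA : ∀ x ∈ XA, τ x = τA x) (hB : ∀ x ∈ XB, τ x = τB x)
    (hΦB : S.HasConfig XB CB ΦB τB) :
    S.wweight ω (XA ∪ XB) CA Ψ τ =
      S.wweight ω XA CA ΨA τA + S.configWeight ω CA Ψ ΦB := by
  rw [wweight, wweight, configWeight, ← Finset.sum_add_distrib]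
  refine Finset.sum_congr rfl fun c hc => ?_
  rw [← mul_add, ← Int.cast_add, S.cb_union hX, S.cb_congr hA, S.cb_congr hB, hΨA c hc,
    hΦB.apply_of_notMem (Finset.disjoint_left.mp hC hc), Nat.cast_add,
    Int.min_natCast_add_sub_eq]

theorem wweight_union_eq [DecidableEq V] [DecidableEq C] [Fintype V] [Fintype C] (ω : C → ℝ)
    {Xv1 Xv2 : Finset V} {Cv1 Cv2 : Finset C} (hX : Disjoint Xv1 Xv2) (hC : Disjoint Cv1 Cv2)
    {Φ Ψ Φ1 Ψ1 Φ2 Ψ2 : C → ℕ} (hlink : S.LinkedW Xv1 Xv2 Cv1 Cv2 Φ Ψ Φ1 Ψ1 Φ2 Ψ2)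
    {τ τ1 τ2 : V → D} (h1 : ∀ x ∈ Xv1, τ x = τ1 x) (h2 : ∀ x ∈ Xv2, τ x = τ2 x)
    (hc1 : S.HasConfig Xv1 Cv1 Φ1 τ1) (hc2 : S.HasConfig Xv2 Cv2 Φ2 τ2) :
    S.wweight ω (Xv1 ∪ Xv2) (Cv1 ∪ Cv2) Ψ τ =
      S.wweight ω Xv1 Cv1 Ψ1 τ1 + S.wweight ω Xv2 Cv2 Ψ2 τ2 +
        (S.configWeight ω Cv1 Ψ Φ2 + S.configWeight ω Cv2 Ψ Φ1) := by
  obtain ⟨-, -, -, -, -, -, -, hΨ1, hΨ2⟩ := hlink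
  rw [S.wweight_union_constraints ω _ hC, S.wweight_union_child ω hX hC hΨ1 h1 h2 hc2,
    Finset.union_comm, S.wweight_union_child ω hX.symm hC.symm hΨ2 h2 h1 hc1]
  ring

end SepSystemGe

/-- Lemma: for linked shapes `(Φ,Ψ)`, `(Φ1,Ψ1)`, `(Φ2,Ψ2)` at an inner vertex `v` with
children `v1`, `v2`, if `τ1, τ1'` have configuration `Φ1` and `τ2, τ2'` have
configuration `Φ2`, and `ω^{Ψ1}(τ1') ≤ ω^{Ψ1}(τ1)` and `ω^{Ψ2}(τ2') ≤ ω^{Ψ2}(τ2)`,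
then `ω^Ψ(τ1' ∪ τ2') ≤ ω^Ψ(τ1 ∪ τ2)`. -/
theorem SepSystemGe.wweight_union_mono {V C D : Type} [DecidableEq V] [DecidableEq C]
    [Fintype V] [Fintype C] (S : SepSystemGe V C D) (ω : C → ℝ)
    (Xv1 Xv2 : Finset V) (Cv1 Cv2 : Finset C)
    (hX : Disjoint Xv1 Xv2) (hC : Disjoint Cv1 Cv2)
    (Φ Ψ Φ1 Ψ1 Φ2 Ψ2 : C → ℕ)
    (hlink : S.LinkedW Xv1 Xv2 Cv1 Cv2 Φ Ψ Φ1 Ψ1 Φ2 Ψ2)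
    (τ1 τ1' τ2 τ2' τ τ' : V → D)
    (h1 : ∀ x ∈ Xv1, τ x = τ1 x) (h2 : ∀ x ∈ Xv2, τ x = τ2 x)
    (h1' : ∀ x ∈ Xv1, τ' x = τ1' x) (h2' : ∀ x ∈ Xv2, τ' x = τ2' x)
    (hc1 : S.HasConfig Xv1 Cv1 Φ1 τ1) (hc2 : S.HasConfig Xv2 Cv2 Φ2 τ2)
    (hc1' : S.HasConfig Xv1 Cv1 Φ1 τ1') (hc2' : S.HasConfig Xv2 Cv2 Φ2 τ2')
    (hw1 : S.wweight ω Xv1 Cv1 Ψ1 τ1' ≤ S.wweight ω Xv1 Cv1 Ψ1 τ1)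
    (hw2 : S.wweight ω Xv2 Cv2 Ψ2 τ2' ≤ S.wweight ω Xv2 Cv2 Ψ2 τ2) :
    S.wweight ω (Xv1 ∪ Xv2) (Cv1 ∪ Cv2) Ψ τ' ≤
      S.wweight ω (Xv1 ∪ Xv2) (Cv1 ∪ Cv2) Ψ τ := by
  rw [S.wweight_union_eq ω hX hC hlink h1 h2 hc1 hc2,
    S.wweight_union_eq ω hX hC hlink h1' h2' hc1' hc2']
  linarith
end
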